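/- For any prime p > 2 and any positive non-square integer d with p not dividing d, the period length m_d(p) of the sequence of x-coordinates of solutions of the Pell equation x² − d·y² = 1 taken modulo p divides p² − 1. -/

import Mathlib

/-!
Every element of `𝔽_p` is a square in `𝔽_{p²}`, so a square root of `d` there gives a ring map
`φ : ℤ[√d] → 𝔽_{p²}`. For a solution `b` we have `2 b.x = φ b + φ b⁻¹`, and `φ a` lies in the
multiplicative group of `𝔽_{p²}`, of order `p² - 1`. As `2` is invertible for odd `p`, `p² - 1` is
a period of `n ↦ (aⁿ).x mod p`, and the least period of a sequence divides all its periods.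
-/

theorem Function.Periodic.sInf_dvd {α : Type*} {f : ℕ → α} {T : ℕ}
    (h : Function.Periodic f T) (hT : 0 < T) :
    sInf {c : ℕ | 0 < c ∧ Function.Periodic f c} ∣ T := by
  set S := {c : ℕ | 0 < c ∧ Function.Periodic f c}
  obtain ⟨hm, hmper⟩ : sInf S ∈ S := Nat.sInf_mem ⟨T, hT, h⟩
  refine Nat.dvd_of_mod_eq_zero (Nat.eq_zero_of_not_pos fun hr => ?_)
  have hrper : Function.Periodic f (T % sInf S) := fun n => by
    rw [← hmper.nat_mul (T / sInf S) (n + T % sInf S), Nat.cast_id, add_assoc,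
      Nat.mod_add_div', h]
  exact (Nat.mod_lt T hm).not_ge (Nat.sInf_le ⟨hr, hrper⟩)

theorem GaloisField.pow_sq_sub_one_eq_one (p : ℕ) [Fact p.Prime] {x : GaloisField p 2}
    (hx : x ≠ 0) : x ^ (p ^ 2 - 1) = 1 := by
  let _ := Fintype.ofFinite (GaloisField p 2)
  rw [← GaloisField.card p 2 two_ne_zero, Nat.card_eq_fintype_card]
  exact FiniteField.pow_card_sub_one_eq_one x hx

theorem GaloisField.isSquare_algebraMap (p : ℕ) [Fact p.Prime] (c : ZMod p) :
    IsSquare (algebraMap (ZMod p) (GaloisField p 2) c) := by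
  have hchar : ringChar (GaloisField p 2) = p := ringChar.eq _ p
  obtain rfl | hp2 := eq_or_ne p 2
  · exact FiniteField.isSquare_of_char_two hchar _
  obtain rfl | hc := eq_or_ne c 0
  · simp
  let _ := Fintype.ofFinite (GaloisField p 2)
  obtain ⟨k, hk⟩ := (Fact.out : p.Prime).odd_of_ne_two hp2
  have hexp : Fintype.card (GaloisField p 2) / 2 = (p - 1) * (k + 1) := by
    rw [← Nat.card_eq_fintype_card, GaloisField.card p 2 two_ne_zero, hk]
    have : (2 * k + 1) ^ 2 = 2 * ((2 * k + 1 - 1) * (k + 1)) + 1 := by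
      rw [Nat.add_sub_cancel]; ring
    omega
  rw [FiniteField.isSquare_iff (by rwa [hchar]) ((map_ne_zero _).mpr hc), hexp,
    ← map_pow, pow_mul, ZMod.pow_card_sub_one_eq_one hc, one_pow, map_one]

namespace Pell.Solution₁

variable {d : ℤ} {R : Type*} [CommRing R]

theorem two_mul_x_cast (φ : ℤ√d →+* R) (b : Solution₁ d) :
    2 * (b.x : R) = φ b + φ ↑b⁻¹ := by
  have : (b : ℤ√d) + ↑b⁻¹ = ((2 * b.x : ℤ) : ℤ√d) := by
    ext
    · change b.x + b⁻¹.x = _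
      simp [x_inv, two_mul]
    · change b.y + b⁻¹.y = _
      simp [y_inv]
  rw [← map_add, this, map_intCast]
  push_cast
  ring

theorem periodic_x_cast [IsDomain R] (h2 : (2 : R) ≠ 0) (φ : ℤ√d →+* R) (a : Solution₁ d)
    {T : ℕ} (hT : φ a ^ T = 1) : Function.Periodic (fun n => ((a ^ n).x : R)) T := by
  let ψ : Solution₁ d →* R := φ.toMonoidHom.comp (unitary (ℤ√d)).subtype
  have hψ (b : Solution₁ d) : ψ b = φ b := rfl
  have hT' : ψ (a ^ T) = 1 := by rw [map_pow]; exact hT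
  have hinv : ψ (a ^ T)⁻¹ = 1 := by
    simpa only [map_mul, hT', one_mul, map_one] using congrArg ψ (mul_inv_cancel (a ^ T))
  intro n
  refine mul_left_cancel₀ h2 ?_
  simp only [two_mul_x_cast φ, ← hψ, pow_add, mul_inv, map_mul, hT', hinv, mul_one]

end Pell.Solution₁

theorem stmt7 (d : ℤ) (p : ℕ) (hp : p.Prime)
    (hp2 : 2 < p)
    (a : Pell.Solution₁ d) :
    sInf {T : ℕ | 0 < T ∧
        ∀ n : ℕ, (((a ^ (n + T)).x : ZMod p) = ((a ^ n).x : ZMod p))} ∣ p ^ 2 - 1 := by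
  have := Fact.mk hp
  obtain ⟨s, hs⟩ : IsSquare ((d : ℤ) : GaloisField p 2) := by
    simpa only [map_intCast] using GaloisField.isSquare_algebraMap p (d : ZMod p)
  let φ : ℤ√d →+* GaloisField p 2 := Zsqrtd.lift ⟨s, hs.symm⟩
  have h2 : (2 : GaloisField p 2) ≠ 0 := Ring.two_ne_zero (by rw [ringChar.eq _ p]; omega)
  have hperiod := Pell.Solution₁.periodic_x_cast h2 φ a
    (GaloisField.pow_sq_sub_one_eq_one p (Unitary.isUnit_coe.map φ).ne_zero)
  refine Function.Periodic.sInf_dvd (f := fun n => ((a ^ n).x : ZMod p))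
    (fun n => (algebraMap (ZMod p) (GaloisField p 2)).injective ?_)
    (Nat.sub_pos_of_lt (Nat.one_lt_pow two_ne_zero hp.one_lt))
  simpa only [map_intCast] using hperiod n
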